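/- For each fixed ε > 0, the function on compact metric measure spaces sending (X, d_X, ν_X) to ρ_ε^X := inf_{x ∈ X} ν_X(C_ε(x)) is upper semi-continuous with respect to the Gromov–Hausdorff–Prokhorov metric, where C_ε(x) is the closed ε-ball around x. -/

import Mathlib

/-! Every point `y` of the limit lies within `η` of the image of some `x ∈ X n` in the common
space, so the Lévy–Prokhorov inequality `μ B ≤ ν (thickening η B) + η` yields, eventually,
`μ n (closedBall x ε) ≤ ν (closedBall y (ε + 2η)) + η`. Letting `η → 0`, the closed balls
`closedBall y (ε + 2η)` decrease to `closedBall y ε`, whose measure is their limit. -/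

open MeasureTheory Metric Set Filter

/-- A sequence of compact metric probability spaces converges to a limit space in the
Gromov–Hausdorff–Prokhorov sense if, for every `ε > 0`, eventually the spaces can be
isometrically embedded into a common metric space with Hausdorff distance of the images
and Prokhorov distance of the pushforward measures both `< ε`. -/
def GHPTendsto (X : ℕ → Type) [∀ n, MetricSpace (X n)]
    [∀ n, MeasurableSpace (X n)] [∀ n, BorelSpace (X n)]
    (μ : ∀ n, Measure (X n))
    (Y : Type) [MetricSpace Y] [MeasurableSpace Y] [BorelSpace Y]
    (ν : Measure Y) : Prop :=
  ∀ ε : ℝ, 0 < ε → ∀ᶠ n in atTop,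
    ∃ (Z : Type) (_ : MetricSpace Z) (_ : MeasurableSpace Z) (_ : BorelSpace Z)
      (φ : X n → Z) (ψ : Y → Z), Isometry φ ∧ Isometry ψ ∧
      hausdorffDist (Set.range φ) (Set.range ψ) < ε ∧
      levyProkhorovDist ((μ n).map φ) (ν.map ψ) < ε

open Topology

section MetricMeasure

variable {α : Type*} [PseudoMetricSpace α]

theorem thickening_closedBall_subset_closedBall (x : α) (r δ : ℝ) :
    thickening δ (closedBall x r) ⊆ closedBall x (r + δ) := by
  intro z hz
  obtain ⟨w, hw, hzw⟩ := mem_thickening_iff.1 hz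
  rw [mem_closedBall] at hw ⊢
  linarith [dist_triangle z w x]

variable [MeasurableSpace α] [OpensMeasurableSpace α]

theorem tendsto_measure_closedBall_nhdsGT (μ : Measure α) [IsFiniteMeasure μ] (x : α) (r : ℝ) :
    Tendsto (fun r' => μ (closedBall x r')) (𝓝[>] r) (𝓝 (μ (closedBall x r))) := by
  have h := tendsto_measure_biInter_gt (μ := μ) (s := closedBall x) (a := r)
    (fun _ _ => measurableSet_closedBall.nullMeasurableSet)
    (fun _ _ _ hij => closedBall_subset_closedBall hij) ⟨r + 1, by linarith, measure_ne_top μ _⟩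
  rwa [biInter_gt_closedBall] at h

theorem measure_closedBall_le_of_levyProkhorovDist_lt {μ ν : Measure α} [IsFiniteMeasure μ]
    [IsFiniteMeasure ν] {a b : α} {r η : ℝ} (hab : dist a b < η)
    (hμν : levyProkhorovDist μ ν < η) :
    μ (closedBall a r) ≤ ν (closedBall b (r + 2 * η)) + ENNReal.ofReal η := by
  have hη : 0 ≤ η := dist_nonneg.trans hab.le
  have hE : levyProkhorovEDist μ ν < ENNReal.ofReal η :=
    (ENNReal.lt_ofReal_iff_toReal_lt (levyProkhorovEDist_ne_top μ ν)).2 hμν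
  have hsub : thickening η (closedBall a r) ⊆ closedBall b (r + 2 * η) :=
    (thickening_closedBall_subset_closedBall a r η).trans
      (closedBall_subset_closedBall' (by linarith))
  calc μ (closedBall a r)
      ≤ ν (thickening (ENNReal.ofReal η).toReal (closedBall a r)) + ENNReal.ofReal η :=
        left_measure_le_of_levyProkhorovEDist_lt hE measurableSet_closedBall
    _ ≤ ν (closedBall b (r + 2 * η)) + ENNReal.ofReal η := by
        rw [ENNReal.toReal_ofReal hη]
        gcongr

end MetricMeasure

theorem exists_dist_lt_of_hausdorffDist_range_lt {X Y Z : Type*} [TopologicalSpace X]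
    [CompactSpace X] [Nonempty X] [TopologicalSpace Y] [CompactSpace Y] [PseudoMetricSpace Z]
    {φ : X → Z} {ψ : Y → Z} (hφ : Continuous φ) (hψ : Continuous ψ) {η : ℝ}
    (h : hausdorffDist (range φ) (range ψ) < η) (y : Y) : ∃ x, dist (φ x) (ψ y) < η := by
  have hfin : hausdorffEDist (range φ) (range ψ) ≠ ⊤ :=
    hausdorffEDist_ne_top_of_nonempty_of_bounded (range_nonempty φ) ⟨ψ y, mem_range_self y⟩
      (isCompact_range hφ).isBounded (isCompact_range hψ).isBounded
  obtain ⟨_, ⟨x, rfl⟩, hx⟩ := exists_dist_lt_of_hausdorffDist_lt' (mem_range_self y) h hfin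
  exact ⟨x, hx⟩

theorem Isometry.map_measure_closedBall {X Z : Type*} [PseudoMetricSpace X] [MeasurableSpace X]
    [OpensMeasurableSpace X] [PseudoMetricSpace Z] [MeasurableSpace Z] [BorelSpace Z]
    {φ : X → Z} (hφ : Isometry φ) (μ : Measure X) (x : X) (r : ℝ) :
    μ.map φ (closedBall (φ x) r) = μ (closedBall x r) := by
  rw [Measure.map_apply hφ.continuous.measurable measurableSet_closedBall,
    hφ.preimage_closedBall]

theorem limsup_iInf_measure_closedBall_le_of_GHPTendsto
    {X : ℕ → Type} [∀ n, MetricSpace (X n)] [∀ n, CompactSpace (X n)]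
    [∀ n, MeasurableSpace (X n)] [∀ n, BorelSpace (X n)]
    {μ : ∀ n, Measure (X n)} [∀ n, IsProbabilityMeasure (μ n)]
    {Y : Type} [MetricSpace Y] [CompactSpace Y] [MeasurableSpace Y] [BorelSpace Y]
    {ν : Measure Y} [IsFiniteMeasure ν]
    (hconv : GHPTendsto X μ Y ν) (r : ℝ) (y : Y) {η : ℝ} (hη : 0 < η) :
    limsup (fun n => ⨅ x : X n, μ n (closedBall x r)) atTop ≤
      ν (closedBall y (r + 2 * η)) + ENNReal.ofReal η := by
  refine limsup_le_of_le (by isBoundedDefault) ?_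
  filter_upwards [hconv η hη] with n ⟨Z, _, _, _, φ, ψ, hφ, hψ, hH, hP⟩
  have := nonempty_of_isProbabilityMeasure (μ n)
  obtain ⟨x, hx⟩ := exists_dist_lt_of_hausdorffDist_range_lt hφ.continuous hψ.continuous hH y
  calc ⨅ x, μ n (closedBall x r)
      ≤ μ n (closedBall x r) := iInf_le _ x
    _ = (μ n).map φ (closedBall (φ x) r) := (hφ.map_measure_closedBall _ _ _).symm
    _ ≤ ν.map ψ (closedBall (ψ y) (r + 2 * η)) + ENNReal.ofReal η :=
        measure_closedBall_le_of_levyProkhorovDist_lt hx hP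
    _ = ν (closedBall y (r + 2 * η)) + ENNReal.ofReal η := by
        rw [hψ.map_measure_closedBall]

theorem rho_upperSemicontinuous_GHP_general
    (ε : ℝ)
    (X : ℕ → Type) [∀ n, MetricSpace (X n)] [∀ n, CompactSpace (X n)]
    [∀ n, MeasurableSpace (X n)] [∀ n, BorelSpace (X n)]
    (μ : ∀ n, Measure (X n)) [∀ n, IsProbabilityMeasure (μ n)]
    (Y : Type) [MetricSpace Y] [CompactSpace Y] [MeasurableSpace Y] [BorelSpace Y]
    (ν : Measure Y) [IsProbabilityMeasure ν]
    (hconv : GHPTendsto X μ Y ν) :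
    Filter.limsup (fun n => ⨅ x : X n, μ n (Metric.closedBall x ε)) atTop ≤
      ⨅ y : Y, ν (Metric.closedBall y ε) := by
  refine le_iInf fun y => ?_
  have hrad : Tendsto (fun η : ℝ => ε + 2 * η) (𝓝[>] 0) (𝓝[>] ε) := by
    refine tendsto_nhdsWithin_iff.2 ⟨?_, eventually_nhdsWithin_of_forall fun η hη => ?_⟩
    · exact tendsto_nhdsWithin_of_tendsto_nhds (Continuous.tendsto' (by fun_prop) _ _ (by simp))
    · simp only [mem_Ioi] at hη ⊢
      linarith
  have hlim : Tendsto (fun η => ν (closedBall y (ε + 2 * η)) + ENNReal.ofReal η) (𝓝[>] 0)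
      (𝓝 (ν (closedBall y ε))) := by
    simpa using ((tendsto_measure_closedBall_nhdsGT ν y ε).comp hrad).add
      (ENNReal.tendsto_ofReal (tendsto_nhdsWithin_of_tendsto_nhds tendsto_id))
  exact ge_of_tendsto hlim (eventually_nhdsWithin_of_forall fun η hη =>
    limsup_iInf_measure_closedBall_le_of_GHPTendsto hconv ε y hη)

/-- Upper semi-continuity of `ρ_ε` with respect to GHP convergence (sequential form):
along any GHP-convergent sequence, the `limsup` of the `ρ_ε` of the approximating
spaces is at most `ρ_ε` of the limit. -/
theorem rho_upperSemicontinuous_GHP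
    (ε : ℝ) (hε : 0 < ε)
    (X : ℕ → Type) [∀ n, MetricSpace (X n)] [∀ n, CompactSpace (X n)]
    [∀ n, MeasurableSpace (X n)] [∀ n, BorelSpace (X n)]
    (μ : ∀ n, Measure (X n)) [∀ n, IsProbabilityMeasure (μ n)]
    (Y : Type) [MetricSpace Y] [CompactSpace Y] [MeasurableSpace Y] [BorelSpace Y]
    (ν : Measure Y) [IsProbabilityMeasure ν]
    (hconv : GHPTendsto X μ Y ν) :
    Filter.limsup (fun n => ⨅ x : X n, μ n (Metric.closedBall x ε)) atTop ≤
      ⨅ y : Y, ν (Metric.closedBall y ε) :=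
  rho_upperSemicontinuous_GHP_general ε X μ Y ν hconv
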